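/- Let P = P_𝔱 ⊕ P_𝔫 be an endomorphism of 𝔪 = 𝔱 ⊕ 𝔫, where P_𝔱 is a Q-symmetric positive-definite endomorphism of 𝔱 and P_𝔫 is a Q-symmetric positive-definite endomorphism of 𝔫 commuting with ad(k)|_𝔫 for every k ∈ 𝔨. Then the operator S(P) defined by the implicit equation is given explicitly by: S(P)(T).T' = 0; S(P)(T).Y = −[T,Y] + (1/2) P_𝔫⁻¹.[P_𝔱.T, Y]; S(P)(X).T' = −(1/2) P_𝔫⁻¹.[X, P_𝔱.T']; S(P)(X).Y = −(1/2) [X,Y]_𝔪 − (1/2) P_𝔫⁻¹.(([X, P_𝔫.Y])_𝔫 − ([P_𝔫.X, Y])_𝔫), for all T, T' ∈ 𝔱 and X, Y ∈ 𝔫 (here [𝔱,𝔫] ⊆ 𝔫, so all terms are well-defined). -/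

import Mathlib

open scoped RealInnerProductSpace

noncomputable section

variable {G : Type*} [NormedAddCommGroup G] [InnerProductSpace ℝ G] [FiniteDimensional ℝ G]

/-- Orthogonal projection onto the subspace `W`, as a plain map `G → G`. -/
def pr (W : Submodule ℝ G) : G → G := fun v => (Submodule.orthogonalProjection W v : G)

/-- Orthogonal projection onto the subspace `W`, as a continuous linear endomorphism of `G`. -/
def projL (W : Submodule ℝ G) : G →L[ℝ] G := W.subtypeL.comp (Submodule.orthogonalProjection W)

variable (br : G →ₗ[ℝ] G →ₗ[ℝ] G)

/-- `br` is a Lie bracket making `G` a real Lie algebra, and the inner product `Q` of `G`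
is ad-invariant: `Q([Z,X],Y) + Q(X,[Z,Y]) = 0`. -/
structure IsLieQ : Prop where
  alt : ∀ x : G, br x x = 0
  jacobi : ∀ x y z : G, br x (br y z) + br y (br z x) + br z (br x y) = 0
  adInv : ∀ Z X Y : G, ⟪br Z X, Y⟫ + ⟪X, br Z Y⟫ = 0

/-- `𝔥 ⊆ 𝔨` are Lie subalgebras of `𝔤` with `[𝔨,𝔨] ⊆ 𝔥`. -/
structure IsToralPair (𝔥 𝔨 : Submodule ℝ G) : Prop where
  subalg_h : ∀ x ∈ 𝔥, ∀ y ∈ 𝔥, br x y ∈ 𝔥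
  subalg_k : ∀ x ∈ 𝔨, ∀ y ∈ 𝔨, br x y ∈ 𝔨
  h_le_k : 𝔥 ≤ 𝔨
  bk_in_h : ∀ x ∈ 𝔨, ∀ y ∈ 𝔨, br x y ∈ 𝔥

/-- no nonzero element of `𝔫 = 𝔨ᗮ` commutes with all of `𝔨`. -/
def NoTrivial (𝔨 : Submodule ℝ G) : Prop :=
  ∀ X ∈ 𝔨ᗮ, (∀ k ∈ 𝔨, br k X = 0) → X = 0

/-- `A` maps `W` into itself and is `Q`-symmetric on `W`. -/
def SymOn (W : Submodule ℝ G) (A : G →L[ℝ] G) : Prop :=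
  (∀ v ∈ W, A v ∈ W) ∧ ∀ v ∈ W, ∀ w ∈ W, ⟪A v, w⟫ = ⟪v, A w⟫

/-- `A` is positive definite on the subspace `W`. -/
def PosDefOn (W : Submodule ℝ G) (A : G →L[ℝ] G) : Prop :=
  ∀ v ∈ W, v ≠ 0 → 0 < ⟪A v, v⟫

/-- `A` commutes with `ad(k)|_𝔫` on `𝔫 = 𝔨ᗮ`, for every `k ∈ 𝔨`. -/
def CommAd (𝔨 : Submodule ℝ G) (A : G →L[ℝ] G) : Prop :=
  ∀ k ∈ 𝔨, ∀ X ∈ 𝔨ᗮ, A (br k X) = br k (A X)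

/-- `Ainv` maps `W` to itself and is a two-sided inverse of `A` on the subspace `W`. -/
def InvOn' (W : Submodule ℝ G) (A Ainv : G →L[ℝ] G) : Prop :=
  (∀ v ∈ W, Ainv v ∈ W) ∧ (∀ v ∈ W, Ainv (A v) = v) ∧ (∀ v ∈ W, A (Ainv v) = v)

/-- The explicit formula for the extended operator `S(P)(V).W` of the generalized submersion
metric `P = P_𝔱 ⊕ P_𝔫`, where `𝔱 = 𝔨 ⊓ 𝔥ᗮ`, `𝔪 = 𝔥ᗮ`, `𝔫 = 𝔨ᗮ`:
`S(P)(T).T' = 0`, `S(P)(T).Y = -[T,Y] + (1/2) P_𝔫⁻¹.[P_𝔱.T, Y]`,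
`S(P)(X).T' = -(1/2) P_𝔫⁻¹.[X, P_𝔱.T']`,
`S(P)(X).Y = -(1/2)[X,Y]_𝔪 - (1/2) P_𝔫⁻¹.(([X,P_𝔫.Y])_𝔫 - ([P_𝔫.X,Y])_𝔫)`. -/
def Sfun (𝔥 𝔨 : Submodule ℝ G) (pt pn pninv : G →L[ℝ] G) (V W : G) : G :=
  -(br (pr (𝔨 ⊓ 𝔥ᗮ) V) (pr 𝔨ᗮ W)) + (2⁻¹ : ℝ) • pninv (br (pt (pr (𝔨 ⊓ 𝔥ᗮ) V)) (pr 𝔨ᗮ W))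
    - (2⁻¹ : ℝ) • pninv (br (pr 𝔨ᗮ V) (pt (pr (𝔨 ⊓ 𝔥ᗮ) W)))
    - (2⁻¹ : ℝ) • pr 𝔥ᗮ (br (pr 𝔨ᗮ V) (pr 𝔨ᗮ W))
    - (2⁻¹ : ℝ) • pninv (pr 𝔨ᗮ (br (pr 𝔨ᗮ V) (pn (pr 𝔨ᗮ W)))
        - pr 𝔨ᗮ (br (pn (pr 𝔨ᗮ V)) (pr 𝔨ᗮ W)))

/-- The extended curvature `Rm(P)(V₁,V₂).W` of the generalized submersion metric
`P = P_𝔱 ⊕ P_𝔫`: `Rm(P)(V₁,V₂) = ad([V₁,V₂]_𝔥)|_𝔪 - [S(P)(V₁),S(P)(V₂)] - S(P)([V₁,V₂]_𝔪)`. -/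
def Rmfun (𝔥 𝔨 : Submodule ℝ G) (pt pn pninv : G →L[ℝ] G) (V₁ V₂ W : G) : G :=
  br (pr 𝔥 (br V₁ V₂)) W
    - (Sfun br 𝔥 𝔨 pt pn pninv V₁ (Sfun br 𝔥 𝔨 pt pn pninv V₂ W)
        - Sfun br 𝔥 𝔨 pt pn pninv V₂ (Sfun br 𝔥 𝔨 pt pn pninv V₁ W))
    - Sfun br 𝔥 𝔨 pt pn pninv (pr 𝔥ᗮ (br V₁ V₂)) W

/-- `Tr (𝔪 ∋ Z ↦ Rm(P)(V₁, Z).V₂)`, computed via an orthonormal basis of `𝔪 = 𝔥ᗮ`. -/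
def RicBilin (𝔥 𝔨 : Submodule ℝ G) (pt pn pninv : G →L[ℝ] G) (V₁ V₂ : G) : ℝ :=
  ∑ i, ⟪((stdOrthonormalBasis ℝ 𝔥ᗮ) i : G),
        Rmfun br 𝔥 𝔨 pt pn pninv V₁ ((stdOrthonormalBasis ℝ 𝔥ᗮ) i : G) V₂⟫

/-- `Ric` is the extended Ricci endomorphism of the generalized submersion metric
`P = P_𝔱 ⊕ P_𝔫`: it maps `𝔪 = 𝔥ᗮ` to `𝔪`, vanishes on `𝔪ᗮ`, and satisfies
`Q(Ric.V₁, V₂) = Tr(𝔪 ∋ Z ↦ Rm(P)(V₁,Z).V₂)` for all `V₁, V₂ ∈ 𝔪`. -/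
def IsExtRic (𝔥 𝔨 : Submodule ℝ G) (pt pn pninv Ric : G →L[ℝ] G) : Prop :=
  Ric = (projL 𝔥ᗮ).comp (Ric.comp (projL 𝔥ᗮ)) ∧
  ∀ V₁ ∈ 𝔥ᗮ, ∀ V₂ ∈ 𝔥ᗮ, ⟪Ric V₁, V₂⟫ = RicBilin br 𝔥 𝔨 pt pn pninv V₁ V₂

/-- `SN` is the operator `S_N(P_𝔫)` of the base space `N`, relative to the reductive
decomposition `𝔤 = 𝔨 ⊕ 𝔫`, defined by the implicit equation
`-2 Q(S_N(X).Y, Z) = Q([X,Y]_𝔫, Z) + Q([P_𝔫⁻¹.Z, X]_𝔫, P_𝔫.Y) + Q([P_𝔫⁻¹.Z, Y]_𝔫, P_𝔫.X)`. -/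
def IsSN (𝔨 : Submodule ℝ G) (pn pninv : G →L[ℝ] G) (SN : G → G → G) : Prop :=
  (∀ X ∈ 𝔨ᗮ, ∀ Y ∈ 𝔨ᗮ, SN X Y ∈ 𝔨ᗮ) ∧
  ∀ X ∈ 𝔨ᗮ, ∀ Y ∈ 𝔨ᗮ, ∀ Z ∈ 𝔨ᗮ,
    (-2 : ℝ) * ⟪SN X Y, Z⟫ =
      ⟪pr 𝔨ᗮ (br X Y), Z⟫ + ⟪pr 𝔨ᗮ (br (pninv Z) X), pn Y⟫ + ⟪pr 𝔨ᗮ (br (pninv Z) Y), pn X⟫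

/-- The curvature `Rm_N(P_𝔫)(X,Y).W` of the base space `N`:
`Rm_N(X,Y) = ad([X,Y]_𝔨)|_𝔫 - [S_N(X),S_N(Y)] - S_N([X,Y]_𝔫)`. -/
def RmNfun (𝔨 : Submodule ℝ G) (SN : G → G → G) (X Y W : G) : G :=
  br (pr 𝔨 (br X Y)) W - (SN X (SN Y W) - SN Y (SN X W)) - SN (pr 𝔨ᗮ (br X Y)) W

/-- `RicN` is the Ricci endomorphism `Ric_N(P_𝔫)` of the base space `N`, relative to the
operator `SN = S_N(P_𝔫)`: it maps `𝔫 = 𝔨ᗮ` to `𝔫`, vanishes on `𝔫ᗮ`, and satisfies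
`Q(RicN.X, Y) = Tr(𝔫 ∋ Z ↦ Rm_N(X,Z).Y)` for all `X, Y ∈ 𝔫`. -/
def IsBaseRic (𝔨 : Submodule ℝ G) (SN : G → G → G) (RicN : G →L[ℝ] G) : Prop :=
  RicN = (projL 𝔨ᗮ).comp (RicN.comp (projL 𝔨ᗮ)) ∧
  ∀ X ∈ 𝔨ᗮ, ∀ Y ∈ 𝔨ᗮ,
    ⟪RicN X, Y⟫ = ∑ i, ⟪((stdOrthonormalBasis ℝ 𝔨ᗮ) i : G),
      RmNfun br 𝔨 SN X ((stdOrthonormalBasis ℝ 𝔨ᗮ) i : G) Y⟫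

end

/-!
`S(P)(V₁).V₂ ∈ 𝔪` is determined by its `Q`-products with `𝔱` and with `𝔫`, so each formula is
checked by pairing both sides with `T₃ ∈ 𝔱`, where `P⁻¹` acts as `P_𝔱⁻¹` and lands in `𝔨`, and with
`Y₃ ∈ 𝔫`, where `P⁻¹` acts as `P_𝔫⁻¹`. The resulting terms are evaluated with `[𝔨,𝔨] ⊆ 𝔥`,
`[𝔨,𝔫] ⊆ 𝔫`, the invariance `Q([X,Y],Z) = Q(X,[Y,Z])`, the symmetry of `P_𝔫⁻¹`, and the fact that
`ad(k)` commutes with `P_𝔫` and is therefore skew for `Q(·, P_𝔫 ·)`. The mixed case `S(X).T'` is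
read off from `S(T').X`, since the implicit equation forces `S(V₁).V₂ - S(V₂).V₁ = -[V₁,V₂]_𝔪`.
-/

section InnerProductSpace

variable {G : Type*} [NormedAddCommGroup G] [InnerProductSpace ℝ G] {br : G →ₗ[ℝ] G →ₗ[ℝ] G}

lemma eq_of_inner_eq_of_mem {W : Submodule ℝ G} {a b : G} (ha : a ∈ W) (hb : b ∈ W)
    (h : ∀ v ∈ W, ⟪a, v⟫ = ⟪b, v⟫) : a = b := by
  have hperp : a - b ∈ Wᗮ :=
    (Submodule.mem_orthogonal' _ _).2 fun v hv => by rw [inner_sub_left, h v hv, sub_self]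
  exact sub_eq_zero.1 <| inner_self_eq_zero.1 <|
    Submodule.inner_right_of_mem_orthogonal (sub_mem ha hb) hperp

lemma IsLieQ.br_swap (hLie : IsLieQ br) (x y : G) : br x y = -br y x := by
  have h := hLie.alt (x + y)
  simp only [map_add, LinearMap.add_apply, hLie.alt, zero_add, add_zero] at h
  exact eq_neg_of_add_eq_zero_right h

lemma IsLieQ.inner_br_left (hLie : IsLieQ br) (Z X Y : G) : ⟪br Z X, Y⟫ = -⟪X, br Z Y⟫ :=
  eq_neg_of_add_eq_zero_left (hLie.adInv Z X Y)

lemma IsLieQ.inner_br_assoc (hLie : IsLieQ br) (X Y Z : G) : ⟪br X Y, Z⟫ = ⟪X, br Y Z⟫ := by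
  rw [hLie.br_swap, inner_neg_left, hLie.inner_br_left, neg_neg]

lemma IsLieQ.br_mem_orthogonal (hLie : IsLieQ br) {K : Submodule ℝ G}
    (hK : ∀ x ∈ K, ∀ y ∈ K, br x y ∈ K) {k X : G} (hk : k ∈ K) (hX : X ∈ Kᗮ) : br k X ∈ Kᗮ :=
  (Submodule.mem_orthogonal' _ _).2 fun u hu => by
    rw [hLie.inner_br_left, Submodule.inner_left_of_mem_orthogonal (hK k hk u hu) hX, neg_zero]

lemma SymOn.of_invOn {W : Submodule ℝ G} {A Ainv : G →L[ℝ] G} (hA : SymOn W A)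
    (hinv : InvOn' W A Ainv) : SymOn W Ainv :=
  ⟨hinv.1, fun v hv w hw => by
    calc ⟪Ainv v, w⟫ = ⟪Ainv v, A (Ainv w)⟫ := by rw [hinv.2.2 w hw]
      _ = ⟪A (Ainv v), Ainv w⟫ := (hA.2 _ (hinv.1 v hv) _ (hinv.1 w hw)).symm
      _ = ⟪v, Ainv w⟫ := by rw [hinv.2.2 v hv]⟩

lemma CommAd.inner_br_apply_swap {K : Submodule ℝ G} {A : G →L[ℝ] G} (hcomm : CommAd br K A)
    (hLie : IsLieQ br) (hA : SymOn Kᗮ A) (hK : ∀ x ∈ K, ∀ y ∈ K, br x y ∈ K) {k X Y : G}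
    (hk : k ∈ K) (hX : X ∈ Kᗮ) (hY : Y ∈ Kᗮ) : ⟪br k X, A Y⟫ = -⟪br k Y, A X⟫ := by
  rw [hLie.inner_br_left, ← hcomm k hk Y hY, ← hA.2 X hX _ (hLie.br_mem_orthogonal hK hk hY),
    real_inner_comm]

lemma inf_isOrtho_orthogonal (𝔥 𝔨 : Submodule ℝ G) : 𝔨 ⊓ 𝔥ᗮ ⟂ 𝔨ᗮ :=
  𝔨.isOrtho_orthogonal_right.mono_left inf_le_left

namespace IsToralPair

variable {𝔥 𝔨 : Submodule ℝ G}

lemma orthogonal_le (hpair : IsToralPair br 𝔥 𝔨) : 𝔨ᗮ ≤ 𝔥ᗮ :=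
  Submodule.orthogonal_le hpair.h_le_k

lemma br_mem_orthogonal (hpair : IsToralPair br 𝔥 𝔨) (hLie : IsLieQ br) {k X : G} (hk : k ∈ 𝔨)
    (hX : X ∈ 𝔨ᗮ) : br k X ∈ 𝔨ᗮ :=
  hLie.br_mem_orthogonal hpair.subalg_k hk hX

end IsToralPair

end InnerProductSpace

noncomputable section

variable {G : Type*} [NormedAddCommGroup G] [InnerProductSpace ℝ G] [FiniteDimensional ℝ G]

section Projection

lemma pr_eq_starProjection (W : Submodule ℝ G) : pr W = W.starProjection := rfl

lemma pr_mem (W : Submodule ℝ G) (v : G) : pr W v ∈ W := W.starProjection_apply_mem v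

lemma pr_eq_self {W : Submodule ℝ G} {v : G} (hv : v ∈ W) : pr W v = v :=
  W.starProjection_eq_self_iff.2 hv

lemma pr_eq_zero {W : Submodule ℝ G} {v : G} (hv : v ∈ Wᗮ) : pr W v = 0 :=
  W.starProjection_apply_eq_zero_iff.2 hv

lemma pr_neg (W : Submodule ℝ G) (v : G) : pr W (-v) = -pr W v := map_neg W.starProjection v

lemma inner_pr_left {W : Submodule ℝ G} (v : G) {w : G} (hw : w ∈ W) :
    ⟪pr W v, w⟫ = ⟪v, w⟫ := by
  rw [pr_eq_starProjection, W.inner_starProjection_left_eq_right, ← pr_eq_starProjection,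
    pr_eq_self hw]

lemma inner_pr_right {W : Submodule ℝ G} (v : G) {w : G} (hw : w ∈ W) :
    ⟪w, pr W v⟫ = ⟪w, v⟫ := by
  rw [real_inner_comm, inner_pr_left v hw, real_inner_comm]

lemma eq_of_inner_eq_inf_orthogonal (𝔨 : Submodule ℝ G) {𝔥 : Submodule ℝ G} {a b : G}
    (ha : a ∈ 𝔥ᗮ) (hb : b ∈ 𝔥ᗮ) (ht : ∀ T ∈ 𝔨 ⊓ 𝔥ᗮ, ⟪a, T⟫ = ⟪b, T⟫)
    (hn : ∀ Y ∈ 𝔨ᗮ, ⟪a, Y⟫ = ⟪b, Y⟫) : a = b := by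
  have hk : a - b ∈ 𝔨 := by
    rw [← 𝔨.orthogonal_orthogonal]
    exact (Submodule.mem_orthogonal' _ _).2 fun Y hY => by rw [inner_sub_left, hn Y hY, sub_self]
  have hperp : a - b ∈ (𝔨 ⊓ 𝔥ᗮ)ᗮ :=
    (Submodule.mem_orthogonal' _ _).2 fun T hT => by rw [inner_sub_left, ht T hT, sub_self]
  exact sub_eq_zero.1 <| inner_self_eq_zero.1 <|
    Submodule.inner_right_of_mem_orthogonal (Submodule.mem_inf.2 ⟨hk, sub_mem ha hb⟩) hperp

end Projection

section Operators

variable {br : G →ₗ[ℝ] G →ₗ[ℝ] G}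

lemma SymOn.inner_apply_left {W : Submodule ℝ G} {A : G →L[ℝ] G} (hA : SymOn W A) {v : G}
    (hv : v ∈ W) (u : G) : ⟪A v, u⟫ = ⟪v, A (pr W u)⟫ := by
  rw [← inner_pr_right u (hA.1 v hv), hA.2 v hv _ (pr_mem W u)]

lemma SymOn.inner_pr_br_apply {𝔪 W : Submodule ℝ G} {A : G →L[ℝ] G} (hA : SymOn W A)
    (hLie : IsLieQ br) {Y U V : G} (hY : Y ∈ W) (hV : V ∈ 𝔪) :
    ⟪pr 𝔪 (br (A Y) U), V⟫ = ⟪Y, A (pr W (br U V))⟫ := by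
  rw [inner_pr_left _ hV, hLie.inner_br_assoc, hA.inner_apply_left hY]

lemma IsToralPair.pr_br_eq_zero {𝔥 𝔨 : Submodule ℝ G} (hpair : IsToralPair br 𝔥 𝔨) {k k' : G}
    (hk : k ∈ 𝔨) (hk' : k' ∈ 𝔨) : pr 𝔥ᗮ (br k k') = 0 :=
  pr_eq_zero (𝔥.le_orthogonal_orthogonal (hpair.bk_in_h k hk k' hk'))

end Operators

def blockDiag (𝔱 𝔫 : Submodule ℝ G) (A B : G →L[ℝ] G) (V : G) : G := A (pr 𝔱 V) + B (pr 𝔫 V)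

lemma blockDiag_apply_of_mem_left {𝔱 𝔫 : Submodule ℝ G} (h : 𝔱 ⟂ 𝔫) (A B : G →L[ℝ] G) {T : G}
    (hT : T ∈ 𝔱) : blockDiag 𝔱 𝔫 A B T = A T := by
  rw [blockDiag, pr_eq_self hT, pr_eq_zero (h hT), map_zero, add_zero]

lemma blockDiag_apply_of_mem_right {𝔱 𝔫 : Submodule ℝ G} (h : 𝔱 ⟂ 𝔫) (A B : G →L[ℝ] G) {Y : G}
    (hY : Y ∈ 𝔫) : blockDiag 𝔱 𝔫 A B Y = B Y := by
  rw [blockDiag, pr_eq_self hY, pr_eq_zero (h.symm hY), map_zero, zero_add]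

/-- The implicit equation defining `S(P)` on `𝔪`, with `Pinv` standing for `P⁻¹`. -/
def IsSOperator (br : G →ₗ[ℝ] G →ₗ[ℝ] G) (𝔪 : Submodule ℝ G) (P Pinv : G → G)
    (S : G → G → G) : Prop :=
  (∀ V₁ ∈ 𝔪, ∀ V₂ ∈ 𝔪, S V₁ V₂ ∈ 𝔪) ∧
  ∀ V₁ ∈ 𝔪, ∀ V₂ ∈ 𝔪, ∀ V₃ ∈ 𝔪,
    (-2 : ℝ) * ⟪S V₁ V₂, V₃⟫ =
      ⟪pr 𝔪 (br V₁ V₂), V₃⟫ + ⟪pr 𝔪 (br (Pinv V₃) V₁), P V₂⟫ + ⟪pr 𝔪 (br (Pinv V₃) V₂), P V₁⟫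

namespace IsSOperator

variable {br : G →ₗ[ℝ] G →ₗ[ℝ] G} {S : G → G → G}

lemma apply_swap {𝔪 : Submodule ℝ G} {P Pinv : G → G} (hS : IsSOperator br 𝔪 P Pinv S)
    (hLie : IsLieQ br) {V₁ V₂ : G} (h₁ : V₁ ∈ 𝔪) (h₂ : V₂ ∈ 𝔪) :
    S V₂ V₁ = S V₁ V₂ + pr 𝔪 (br V₁ V₂) := by
  refine eq_of_inner_eq_of_mem (hS.1 _ h₂ _ h₁) (add_mem (hS.1 _ h₁ _ h₂) (pr_mem _ _))
    fun V₃ h₃ => ?_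
  have h₁₂ := hS.2 _ h₁ _ h₂ _ h₃
  have h₂₁ := hS.2 _ h₂ _ h₁ _ h₃
  rw [hLie.br_swap V₂, pr_neg, inner_neg_left] at h₂₁
  rw [inner_add_left]
  linarith

/-! `𝔱 = 𝔨 ⊓ 𝔥ᗮ` is the vertical and `𝔫 = 𝔨ᗮ` the horizontal part of `𝔪 = 𝔥ᗮ`. -/

variable {𝔥 𝔨 : Submodule ℝ G} {pt ptinv pn pninv : G →L[ℝ] G}

theorem apply_vert_vert (hLie : IsLieQ br) (hpair : IsToralPair br 𝔥 𝔨)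
    (hpt : ∀ T ∈ 𝔨 ⊓ 𝔥ᗮ, pt T ∈ 𝔨 ⊓ 𝔥ᗮ) (hptinv : ∀ T ∈ 𝔨 ⊓ 𝔥ᗮ, ptinv T ∈ 𝔨)
    (hpn : SymOn 𝔨ᗮ pn) (hpninv : InvOn' 𝔨ᗮ pn pninv)
    (hS : IsSOperator br 𝔥ᗮ (blockDiag (𝔨 ⊓ 𝔥ᗮ) 𝔨ᗮ pt pn) (blockDiag (𝔨 ⊓ 𝔥ᗮ) 𝔨ᗮ ptinv pninv) S)
    {T T' : G} (hT : T ∈ 𝔨 ⊓ 𝔥ᗮ) (hT' : T' ∈ 𝔨 ⊓ 𝔥ᗮ) : S T T' = 0 := by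
  have hortho := inf_isOrtho_orthogonal 𝔥 𝔨
  refine eq_of_inner_eq_inf_orthogonal 𝔨 (hS.1 _ hT.2 _ hT'.2) (zero_mem _)
    (fun T₃ hT₃ => ?_) fun Y₃ hY₃ => ?_
  · have h := hS.2 _ hT.2 _ hT'.2 _ hT₃.2
    have hk := hptinv _ hT₃
    rw [blockDiag_apply_of_mem_left hortho _ _ hT₃, hpair.pr_br_eq_zero hT.1 hT'.1,
      hpair.pr_br_eq_zero hk hT.1, hpair.pr_br_eq_zero hk hT'.1] at h
    simp only [inner_zero_left, add_zero] at h ⊢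
    linarith
  · have h := hS.2 _ hT.2 _ hT'.2 _ (hpair.orthogonal_le hY₃)
    have hvanish : ∀ {t t'}, t ∈ 𝔨 ⊓ 𝔥ᗮ → t' ∈ 𝔨 ⊓ 𝔥ᗮ → pr 𝔨ᗮ (br t (pt t')) = 0 :=
      fun ht ht' => pr_eq_zero (𝔨.le_orthogonal_orthogonal
        (hpair.subalg_k _ ht.1 _ (hpt _ ht').1))
    rw [blockDiag_apply_of_mem_right hortho _ _ hY₃, blockDiag_apply_of_mem_left hortho _ _ hT,
      blockDiag_apply_of_mem_left hortho _ _ hT', hpair.pr_br_eq_zero hT.1 hT'.1,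
      (hpn.of_invOn hpninv).inner_pr_br_apply hLie hY₃ (hpt _ hT').2,
      (hpn.of_invOn hpninv).inner_pr_br_apply hLie hY₃ (hpt _ hT).2,
      hvanish hT hT', hvanish hT' hT] at h
    simp only [inner_zero_left, inner_zero_right, map_zero, add_zero] at h ⊢
    linarith

theorem apply_vert_horiz (hLie : IsLieQ br) (hpair : IsToralPair br 𝔥 𝔨)
    (hpt : ∀ T ∈ 𝔨 ⊓ 𝔥ᗮ, pt T ∈ 𝔨 ⊓ 𝔥ᗮ) (hptinv : ∀ T ∈ 𝔨 ⊓ 𝔥ᗮ, ptinv T ∈ 𝔨)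
    (hpn : SymOn 𝔨ᗮ pn) (hpncomm : CommAd br 𝔨 pn) (hpninv : InvOn' 𝔨ᗮ pn pninv)
    (hS : IsSOperator br 𝔥ᗮ (blockDiag (𝔨 ⊓ 𝔥ᗮ) 𝔨ᗮ pt pn) (blockDiag (𝔨 ⊓ 𝔥ᗮ) 𝔨ᗮ ptinv pninv) S)
    {T Y : G} (hT : T ∈ 𝔨 ⊓ 𝔥ᗮ) (hY : Y ∈ 𝔨ᗮ) :
    S T Y = -(br T Y) + (2⁻¹ : ℝ) • pninv (br (pt T) Y) := by
  have hortho := inf_isOrtho_orthogonal 𝔥 𝔨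
  have hnm := hpair.orthogonal_le
  have hptT := hpt _ hT
  have hTY := hpair.br_mem_orthogonal hLie hT.1 hY
  have hptTY := hpair.br_mem_orthogonal hLie hptT.1 hY
  have hE : -(br T Y) + (2⁻¹ : ℝ) • pninv (br (pt T) Y) ∈ 𝔨ᗮ :=
    add_mem (neg_mem hTY) (Submodule.smul_mem _ _ (hpninv.1 _ hptTY))
  refine eq_of_inner_eq_inf_orthogonal 𝔨 (hS.1 _ hT.2 _ (hnm hY)) (hnm hE)
    (fun T₃ hT₃ => ?_) fun Y₃ hY₃ => ?_
  · have h := hS.2 _ hT.2 _ (hnm hY) _ hT₃.2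
    have hk := hptinv _ hT₃
    rw [blockDiag_apply_of_mem_left hortho _ _ hT₃, blockDiag_apply_of_mem_left hortho _ _ hT,
      hpair.pr_br_eq_zero hk hT.1, inner_pr_left _ hT₃.2, inner_pr_left _ hptT.2,
      Submodule.inner_left_of_mem_orthogonal hT₃.1 hTY,
      Submodule.inner_left_of_mem_orthogonal hptT.1 (hpair.br_mem_orthogonal hLie hk hY)] at h
    rw [Submodule.inner_left_of_mem_orthogonal hT₃.1 hE]
    simp only [inner_zero_left, add_zero] at h
    linarith
  · have h := hS.2 _ hT.2 _ (hnm hY) _ (hnm hY₃)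
    have hpninv' := hpn.of_invOn hpninv
    rw [blockDiag_apply_of_mem_right hortho _ _ hY₃, blockDiag_apply_of_mem_left hortho _ _ hT,
      blockDiag_apply_of_mem_right hortho _ _ hY, pr_eq_self (hnm hTY),
      hpninv'.inner_pr_br_apply hLie hY₃ (hnm (hpn.1 _ hY)),
      hpninv'.inner_pr_br_apply hLie hY₃ hptT.2, ← hpncomm _ hT.1 _ hY,
      pr_eq_self (hpn.1 _ hTY), hpninv.2.1 _ hTY, hLie.br_swap Y,
      pr_eq_self (neg_mem hptTY), map_neg, inner_neg_right] at h
    rw [inner_add_left, inner_neg_left, real_inner_smul_left]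
    linarith [real_inner_comm Y₃ (S T Y), real_inner_comm Y₃ (br T Y),
      real_inner_comm Y₃ (pninv (br (pt T) Y))]

theorem apply_horiz_horiz (hLie : IsLieQ br) (hpair : IsToralPair br 𝔥 𝔨)
    (hptinv : ∀ T ∈ 𝔨 ⊓ 𝔥ᗮ, ptinv T ∈ 𝔨) (hpn : SymOn 𝔨ᗮ pn) (hpncomm : CommAd br 𝔨 pn)
    (hpninv : InvOn' 𝔨ᗮ pn pninv)
    (hS : IsSOperator br 𝔥ᗮ (blockDiag (𝔨 ⊓ 𝔥ᗮ) 𝔨ᗮ pt pn) (blockDiag (𝔨 ⊓ 𝔥ᗮ) 𝔨ᗮ ptinv pninv) S)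
    {X Y : G} (hX : X ∈ 𝔨ᗮ) (hY : Y ∈ 𝔨ᗮ) :
    S X Y = -((2⁻¹ : ℝ) • pr 𝔥ᗮ (br X Y))
      - (2⁻¹ : ℝ) • pninv (pr 𝔨ᗮ (br X (pn Y)) - pr 𝔨ᗮ (br (pn X) Y)) := by
  have hortho := inf_isOrtho_orthogonal 𝔥 𝔨
  have hnm := hpair.orthogonal_le
  have hN : pninv (pr 𝔨ᗮ (br X (pn Y)) - pr 𝔨ᗮ (br (pn X) Y)) ∈ 𝔨ᗮ :=
    hpninv.1 _ (sub_mem (pr_mem _ _) (pr_mem _ _))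
  refine eq_of_inner_eq_inf_orthogonal 𝔨 (hS.1 _ (hnm hX) _ (hnm hY))
    (sub_mem (neg_mem (Submodule.smul_mem _ _ (pr_mem _ _))) (Submodule.smul_mem _ _ (hnm hN)))
    (fun T₃ hT₃ => ?_) fun Y₃ hY₃ => ?_
  · have h := hS.2 _ (hnm hX) _ (hnm hY) _ hT₃.2
    have hk := hptinv _ hT₃
    rw [blockDiag_apply_of_mem_left hortho _ _ hT₃, blockDiag_apply_of_mem_right hortho _ _ hX,
      blockDiag_apply_of_mem_right hortho _ _ hY,
      pr_eq_self (hnm (hpair.br_mem_orthogonal hLie hk hX)),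
      pr_eq_self (hnm (hpair.br_mem_orthogonal hLie hk hY)),
      hpncomm.inner_br_apply_swap hLie hpn hpair.subalg_k hk hX hY] at h
    rw [inner_sub_left, inner_neg_left, real_inner_smul_left, real_inner_smul_left,
      Submodule.inner_left_of_mem_orthogonal hT₃.1 hN]
    linarith
  · have h := hS.2 _ (hnm hX) _ (hnm hY) _ (hnm hY₃)
    have hpninv' := hpn.of_invOn hpninv
    rw [blockDiag_apply_of_mem_right hortho _ _ hY₃, blockDiag_apply_of_mem_right hortho _ _ hX,
      blockDiag_apply_of_mem_right hortho _ _ hY,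
      hpninv'.inner_pr_br_apply hLie hY₃ (hnm (hpn.1 _ hY)),
      hpninv'.inner_pr_br_apply hLie hY₃ (hnm (hpn.1 _ hX)),
      hLie.br_swap Y, pr_neg, map_neg, inner_neg_right] at h
    rw [inner_sub_left, inner_neg_left, real_inner_smul_left, real_inner_smul_left, map_sub,
      inner_sub_left]
    linarith [real_inner_comm Y₃ (S X Y), real_inner_comm Y₃ (pninv (pr 𝔨ᗮ (br X (pn Y)))),
      real_inner_comm Y₃ (pninv (pr 𝔨ᗮ (br (pn X) Y)))]

theorem apply_horiz_vert (hLie : IsLieQ br) (hpair : IsToralPair br 𝔥 𝔨)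
    (hpt : ∀ T ∈ 𝔨 ⊓ 𝔥ᗮ, pt T ∈ 𝔨 ⊓ 𝔥ᗮ) (hptinv : ∀ T ∈ 𝔨 ⊓ 𝔥ᗮ, ptinv T ∈ 𝔨)
    (hpn : SymOn 𝔨ᗮ pn) (hpncomm : CommAd br 𝔨 pn) (hpninv : InvOn' 𝔨ᗮ pn pninv)
    (hS : IsSOperator br 𝔥ᗮ (blockDiag (𝔨 ⊓ 𝔥ᗮ) 𝔨ᗮ pt pn) (blockDiag (𝔨 ⊓ 𝔥ᗮ) 𝔨ᗮ ptinv pninv) S)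
    {X T' : G} (hX : X ∈ 𝔨ᗮ) (hT' : T' ∈ 𝔨 ⊓ 𝔥ᗮ) :
    S X T' = -((2⁻¹ : ℝ) • pninv (br X (pt T'))) := by
  have hnm := hpair.orthogonal_le
  rw [hS.apply_swap hLie hT'.2 (hnm hX),
    hS.apply_vert_horiz hLie hpair hpt hptinv hpn hpncomm hpninv hT' hX,
    pr_eq_self (hnm (hpair.br_mem_orthogonal hLie hT'.1 hX)), hLie.br_swap (pt T'), map_neg,
    smul_neg]
  abel

end IsSOperator

variable (br : G →ₗ[ℝ] G →ₗ[ℝ] G)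

theorem S_of_submersion_metric_explicit
    (hLie : IsLieQ br) (𝔥 𝔨 : Submodule ℝ G) (hpair : IsToralPair br 𝔥 𝔨)
    (pt ptinv pn pninv : G →L[ℝ] G)
    (hpt : SymOn (𝔨 ⊓ 𝔥ᗮ) pt)
    (hptinv : InvOn' (𝔨 ⊓ 𝔥ᗮ) pt ptinv)
    (hpn : SymOn 𝔨ᗮ pn) (hpncomm : CommAd br 𝔨 pn)
    (hpninv : InvOn' 𝔨ᗮ pn pninv)
    (S : G → G → G)
    (hSmem : ∀ V₁ ∈ 𝔥ᗮ, ∀ V₂ ∈ 𝔥ᗮ, S V₁ V₂ ∈ 𝔥ᗮ)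
    (hSimp : ∀ V₁ ∈ 𝔥ᗮ, ∀ V₂ ∈ 𝔥ᗮ, ∀ V₃ ∈ 𝔥ᗮ,
      (-2 : ℝ) * ⟪S V₁ V₂, V₃⟫ =
        ⟪pr 𝔥ᗮ (br V₁ V₂), V₃⟫
          + ⟪pr 𝔥ᗮ (br (ptinv (pr (𝔨 ⊓ 𝔥ᗮ) V₃) + pninv (pr 𝔨ᗮ V₃)) V₁),
              pt (pr (𝔨 ⊓ 𝔥ᗮ) V₂) + pn (pr 𝔨ᗮ V₂)⟫
          + ⟪pr 𝔥ᗮ (br (ptinv (pr (𝔨 ⊓ 𝔥ᗮ) V₃) + pninv (pr 𝔨ᗮ V₃)) V₂),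
              pt (pr (𝔨 ⊓ 𝔥ᗮ) V₁) + pn (pr 𝔨ᗮ V₁)⟫) :
    (∀ T ∈ 𝔨 ⊓ 𝔥ᗮ, ∀ T' ∈ 𝔨 ⊓ 𝔥ᗮ, S T T' = 0) ∧
    (∀ T ∈ 𝔨 ⊓ 𝔥ᗮ, ∀ Y ∈ 𝔨ᗮ,
      S T Y = -(br T Y) + (2⁻¹ : ℝ) • pninv (br (pt T) Y)) ∧
    (∀ X ∈ 𝔨ᗮ, ∀ T' ∈ 𝔨 ⊓ 𝔥ᗮ,
      S X T' = -((2⁻¹ : ℝ) • pninv (br X (pt T')))) ∧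
    (∀ X ∈ 𝔨ᗮ, ∀ Y ∈ 𝔨ᗮ,
      S X Y = -((2⁻¹ : ℝ) • pr 𝔥ᗮ (br X Y))
        - (2⁻¹ : ℝ) • pninv (pr 𝔨ᗮ (br X (pn Y)) - pr 𝔨ᗮ (br (pn X) Y))) := by
  have hS : IsSOperator br 𝔥ᗮ (blockDiag (𝔨 ⊓ 𝔥ᗮ) 𝔨ᗮ pt pn)
      (blockDiag (𝔨 ⊓ 𝔥ᗮ) 𝔨ᗮ ptinv pninv) S := ⟨hSmem, hSimp⟩
  have hptinv' : ∀ T ∈ 𝔨 ⊓ 𝔥ᗮ, ptinv T ∈ 𝔨 := fun T hT => (hptinv.1 T hT).1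
  exact ⟨fun T hT T' hT' => hS.apply_vert_vert hLie hpair hpt.1 hptinv' hpn hpninv hT hT',
    fun T hT Y hY => hS.apply_vert_horiz hLie hpair hpt.1 hptinv' hpn hpncomm hpninv hT hY,
    fun X hX T' hT' => hS.apply_horiz_vert hLie hpair hpt.1 hptinv' hpn hpncomm hpninv hX hT',
    fun X hX Y hY => hS.apply_horiz_horiz hLie hpair hptinv' hpn hpncomm hpninv hX hY⟩
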